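/- arXiv:0711.1691 — 2 statements merged into one kernel-verified Lean document; each statement's English description precedes it below -/
import Mathlib

section
/- Let C be a class of simplicial complexes that is closed under passing to induced subcomplexes. Suppose that every complex K in C whose number of vertices is less than 3·(dim K + 1) satisfies the Taylor upper bound. Then every complex in C satisfies the Taylor upper bound. -/
/-!
Induction on the number `n` of vertices; complexes with `n < 3d` are covered by hypothesis, so let
`n ≥ 3d`. If some vertex lies in no minimal non-face, `K` is a cone over the induced subcomplex on
the remaining vertices, and the bound passes from that subcomplex to `K` unchanged. Otherwise the
minimal non-faces cover all vertices, and because `n ≥ 3d` already `n - d` of them do, so that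
`M̃_{n-d}(K) = n`. Deleting a vertex that lies in the fewest top-dimensional faces then yields the
bound for `K` from the bound for the subcomplex, as Taylor shifts can only grow when passing from an
induced subcomplex to `K`.
-/

open Finset

/-- A simplicial complex on a finite vertex set: a collection of finite subsets
(faces) of the vertex set, closed under inclusion, containing every singleton. -/
structure SC (α : Type*) [DecidableEq α] where
  verts : Finset α
  faces : Finset (Finset α)
  subset_verts : ∀ F ∈ faces, F ⊆ verts
  down_closed : ∀ F ∈ faces, ∀ G, G ⊆ F → G ∈ faces
  singleton_mem : ∀ v ∈ verts, {v} ∈ faces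

namespace SC

variable {α : Type*} [DecidableEq α]

/-- `dimP1 K = dim K + 1`: the maximal number of vertices of a face. -/
def dimP1 (K : SC α) : ℕ := K.faces.sup Finset.card

/-- The number of faces with exactly `j` vertices, i.e. `f_{j-1}(K)`. -/
def fCard (K : SC α) (j : ℕ) : ℕ := (K.faces.filter (fun F => F.card = j)).card

/-- The minimal non-faces of `K`: subsets of the vertex set which are not faces,
all of whose proper subsets are faces. -/
def minNonFaces (K : SC α) : Finset (Finset α) :=
  K.verts.powerset.filter (fun F => F ∉ K.faces ∧ ∀ G ∈ F.powerset, G ≠ F → G ∈ K.faces)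

/-- The `i`-th minimal Taylor shift `m̃_i(K)`: the minimal number of vertices covered by
a set of exactly `i` minimal non-faces of `K`. -/
noncomputable def mT (K : SC α) (i : ℕ) : ℕ :=
  sInf {n | ∃ T ⊆ K.minNonFaces, T.card = i ∧ (T.sup id).card = n}

/-- The `i`-th maximal Taylor shift `M̃_i(K)`: the maximal number of vertices covered by
a set of exactly `i` minimal non-faces of `K`. -/
noncomputable def MT (K : SC α) (i : ℕ) : ℕ :=
  sSup {n | ∃ T ⊆ K.minNonFaces, T.card = i ∧ (T.sup id).card = n}

/-- The conjectured Taylor upper bound `(∏_{i=1}^{n-d} M̃_i(K))/(n-d)!` on `f_{d-1}(K)`. -/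
noncomputable def taylorUBval (K : SC α) : ℚ :=
  (∏ i ∈ Finset.Icc 1 (K.verts.card - K.dimP1), (K.MT i : ℚ)) /
    (Nat.factorial (K.verts.card - K.dimP1))

/-- The conjectured Taylor lower bound `(∏_{i=1}^{n-d} m̃_i(K))/(n-d)!` on `f_{d-1}(K)`. -/
noncomputable def taylorLBval (K : SC α) : ℚ :=
  (∏ i ∈ Finset.Icc 1 (K.verts.card - K.dimP1), (K.mT i : ℚ)) /
    (Nat.factorial (K.verts.card - K.dimP1))

/-- `K` satisfies the Taylor upper bound: `f_{d-1}(K) ≤ (∏_{i=1}^{n-d} M̃_i(K))/(n-d)!`. -/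
def TaylorUB (K : SC α) : Prop := (K.fCard K.dimP1 : ℚ) ≤ K.taylorUBval

/-- `K` satisfies the Taylor lower bound: `f_{d-1}(K) ≥ (∏_{i=1}^{n-d} m̃_i(K))/(n-d)!`. -/
def TaylorLB (K : SC α) : Prop := K.taylorLBval ≤ (K.fCard K.dimP1 : ℚ)

/-- The induced subcomplex `K[W]`: the faces of `K` contained in `W`. -/
def induced (K : SC α) (W : Finset α) : SC α where
  verts := K.verts ∩ W
  faces := K.faces.filter (fun F => F ⊆ W)
  subset_verts := by
    intro F hF
    simp only [mem_filter] at hF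
    exact subset_inter (K.subset_verts F hF.1) hF.2
  down_closed := by
    intro F hF G hG
    simp only [mem_filter] at hF ⊢
    exact ⟨K.down_closed F hF.1 G hG, hG.trans hF.2⟩
  singleton_mem := by
    intro v hv
    simp only [mem_inter] at hv
    simp only [mem_filter, singleton_subset_iff]
    exact ⟨K.singleton_mem v hv.1, hv.2⟩

end SC

theorem Nat.add_mul_sub_le_mul {n d f g : ℕ} (hdn : d ≤ n) (h : n * g ≤ d * (f + g)) :
    (f + g) * (n - d) ≤ n * f := by
  obtain ⟨k, rfl⟩ := Nat.exists_eq_add_of_le hdn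
  rw [Nat.add_sub_cancel_left]
  nlinarith

namespace SC

variable {α : Type*} [DecidableEq α] (K : SC α)

theorem card_le_dimP1 {F : Finset α} (hF : F ∈ K.faces) : F.card ≤ K.dimP1 :=
  le_sup hF

theorem dimP1_le_card_verts : K.dimP1 ≤ K.verts.card :=
  Finset.sup_le fun F hF => card_le_card (K.subset_verts F hF)

theorem faces_nonempty_of_dimP1_pos (hd : 0 < K.dimP1) : K.faces.Nonempty := by
  by_contra h
  simp [dimP1, not_nonempty_iff_eq_empty.1 h] at hd

theorem exists_mem_faces_card_eq_dimP1 (hd : 0 < K.dimP1) :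
    ∃ F ∈ K.faces, F.card = K.dimP1 := by
  obtain ⟨F, hF, hFc⟩ := exists_mem_eq_sup K.faces (K.faces_nonempty_of_dimP1_pos hd) card
  exact ⟨F, hF, hFc.symm⟩

theorem mem_minNonFaces {G : Finset α} :
    G ∈ K.minNonFaces ↔ G ⊆ K.verts ∧ G ∉ K.faces ∧ ∀ H ⊂ G, H ∈ K.faces := by
  simp [minNonFaces, ssubset_iff_subset_ne]

theorem not_subset_of_mem_minNonFaces {G F : Finset α} (hG : G ∈ K.minNonFaces)
    (hF : F ∈ K.faces) : ¬G ⊆ F := fun hGF =>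
  ((K.mem_minNonFaces).1 hG).2.1 (K.down_closed F hF G hGF)

theorem two_le_card_of_mem_minNonFaces (hK : K.faces.Nonempty) {G : Finset α}
    (hG : G ∈ K.minNonFaces) : 2 ≤ G.card := by
  obtain ⟨hGV, hGnf, -⟩ := (K.mem_minNonFaces).1 hG
  by_contra! h
  obtain hc | hc := Nat.lt_succ_iff_lt_or_eq.1 h
  · obtain ⟨F, hF⟩ := hK
    exact K.not_subset_of_mem_minNonFaces hG hF (by simp_all)
  · obtain ⟨v, rfl⟩ := card_eq_one.1 hc
    exact hGnf (K.singleton_mem v (hGV (mem_singleton_self v)))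

theorem exists_minNonFaces_subset {F : Finset α} (hFV : F ⊆ K.verts) (hF : F ∉ K.faces) :
    ∃ G ∈ K.minNonFaces, G ⊆ F := by
  induction F using Finset.strongInduction with
  | H F ih =>
    by_cases h : ∀ H ⊂ F, H ∈ K.faces
    · exact ⟨F, (K.mem_minNonFaces).2 ⟨hFV, hF, h⟩, Subset.refl F⟩
    · obtain ⟨H, hHF, hH⟩ := not_forall₂.1 h
      obtain ⟨G, hG, hGH⟩ := ih H hHF (hHF.subset.trans hFV) hH
      exact ⟨G, hG, hGH.trans hHF.subset⟩

theorem exists_minNonFaces_mem_subset_insert {F : Finset α} {v : α} (hF : F ∈ K.faces)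
    (hv : v ∈ K.verts) (hvF : insert v F ∉ K.faces) :
    ∃ G ∈ K.minNonFaces, v ∈ G ∧ G ⊆ insert v F := by
  obtain ⟨G, hG, hGvF⟩ :=
    K.exists_minNonFaces_subset (insert_subset hv (K.subset_verts F hF)) hvF
  refine ⟨G, hG, ?_, hGvF⟩
  by_contra hvG
  exact K.not_subset_of_mem_minNonFaces hG hF fun x hx =>
    (mem_insert.1 (hGvF hx)).resolve_left fun hxv => hvG (hxv ▸ hx)

theorem card_verts_sub_dimP1_le_card_minNonFaces (hd : 0 < K.dimP1) :
    K.verts.card - K.dimP1 ≤ K.minNonFaces.card := by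
  obtain ⟨F, hF, hFc⟩ := K.exists_mem_faces_card_eq_dimP1 hd
  have hmnf : ∀ v ∈ K.verts \ F, ∃ G ∈ K.minNonFaces, v ∈ G ∧ G ⊆ insert v F := by
    intro v hv
    obtain ⟨hvV, hvF⟩ := mem_sdiff.1 hv
    refine K.exists_minNonFaces_mem_subset_insert hF hvV fun h => ?_
    have := K.card_le_dimP1 h
    rw [card_insert_of_notMem hvF] at this
    omega
  choose! g hg hvg hgF using hmnf
  have hinj : Set.InjOn g ↑(K.verts \ F) := fun v hv w hw hvw =>
    (mem_insert.1 (hgF w hw (hvw ▸ hvg v hv))).resolve_right (mem_sdiff.1 hv).2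
  have := card_le_card_of_injOn g hg hinj
  rwa [card_sdiff_of_subset (K.subset_verts F hF), hFc] at this

theorem sup_subset_verts {T : Finset (Finset α)} (hT : T ⊆ K.minNonFaces) :
    T.sup id ⊆ K.verts :=
  Finset.sup_le fun _ hG => ((K.mem_minNonFaces).1 (hT hG)).1

theorem verts_induced {W : Finset α} (hW : W ⊆ K.verts) : (K.induced W).verts = W :=
  inter_eq_right.2 hW

theorem mem_faces_induced {W F : Finset α} :
    F ∈ (K.induced W).faces ↔ F ∈ K.faces ∧ F ⊆ W :=
  mem_filter

theorem dimP1_induced_le (W : Finset α) : (K.induced W).dimP1 ≤ K.dimP1 :=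
  sup_mono (filter_subset _ _)

theorem mem_minNonFaces_induced {W : Finset α} (hW : W ⊆ K.verts) {G : Finset α} :
    G ∈ (K.induced W).minNonFaces ↔ G ∈ K.minNonFaces ∧ G ⊆ W := by
  simp only [mem_minNonFaces, K.verts_induced hW, mem_faces_induced]
  constructor
  · rintro ⟨hGW, hG, hmin⟩
    exact ⟨⟨hGW.trans hW, fun h => hG ⟨h, hGW⟩, fun H hH => (hmin H hH).1⟩, hGW⟩
  · rintro ⟨⟨-, hG, hmin⟩, hGW⟩
    exact ⟨hGW, fun h => hG h.1, fun H hH => ⟨hmin H hH, hH.subset.trans hGW⟩⟩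

theorem mem_faces_induced_erase {v : α} {F : Finset α} :
    F ∈ (K.induced (K.verts.erase v)).faces ↔ F ∈ K.faces ∧ v ∉ F := by
  rw [mem_faces_induced, subset_erase]
  exact ⟨fun ⟨hF, _, hvF⟩ => ⟨hF, hvF⟩,
    fun ⟨hF, hvF⟩ => ⟨hF, K.subset_verts F hF, hvF⟩⟩

theorem card_verts_induced_erase {v : α} (hv : v ∈ K.verts) :
    (K.induced (K.verts.erase v)).verts.card = K.verts.card - 1 := by
  rw [K.verts_induced (erase_subset v _), card_erase_of_mem hv]

theorem le_MT {i : ℕ} {T : Finset (Finset α)} (hT : T ⊆ K.minNonFaces) (hc : T.card = i) :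
    (T.sup id).card ≤ K.MT i :=
  le_csSup
    ⟨K.verts.card, fun _ ⟨_, hT, _, hn⟩ => hn ▸ card_le_card (K.sup_subset_verts hT)⟩
    ⟨T, hT, hc, rfl⟩

theorem MT_induced_le {W : Finset α} (hW : W ⊆ K.verts) (i : ℕ) :
    (K.induced W).MT i ≤ K.MT i :=
  csSup_le' fun _ ⟨_, hT, hc, hn⟩ =>
    hn ▸ K.le_MT (fun _ hG => ((K.mem_minNonFaces_induced hW).1 (hT hG)).1) hc

theorem exists_saturated_cover :
    ∃ T ⊆ K.minNonFaces, 2 * T.card ≤ (T.sup id).card ∧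
      ∀ G ∈ K.minNonFaces, (G \ T.sup id).card ≤ 1 := by
  set s := K.minNonFaces.powerset.filter (fun T => 2 * T.card ≤ (T.sup id).card)
  obtain ⟨T, hTs, hmax⟩ := s.exists_max_image (fun T => (T.sup id).card) ⟨∅, by simp [s]⟩
  obtain ⟨hT, hTcard⟩ := mem_filter.1 hTs
  refine ⟨T, mem_powerset.1 hT, hTcard, fun G hG => ?_⟩
  by_contra! h
  have hGT : G ∉ T := fun hGT => by
    have hGsub : G ⊆ T.sup id := le_sup (f := id) hGT
    simp [sdiff_eq_empty_iff_subset.2 hGsub] at h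
  have hsup : ((insert G T).sup id).card = (G \ T.sup id).card + (T.sup id).card := by
    rw [sup_insert, id, sup_eq_union, card_sdiff_add_card]
  have hins : insert G T ∈ s := by
    refine mem_filter.2 ⟨mem_powerset.2 (insert_subset hG (mem_powerset.1 hT)), ?_⟩
    rw [card_insert_of_notMem hGT, hsup]
    omega
  have := hmax _ hins
  omega

theorem exists_cover_card_le (hnc : ∀ v ∈ K.verts, ∃ G ∈ K.minNonFaces, v ∈ G)
    {T : Finset (Finset α)} (hT : T ⊆ K.minNonFaces) :
    ∃ T' ⊆ K.minNonFaces, K.verts ⊆ T'.sup id ∧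
      T'.card ≤ T.card + (K.verts \ T.sup id).card := by
  choose! g hg hvg using hnc
  refine ⟨T ∪ (K.verts \ T.sup id).image g, union_subset hT ?_, fun v hv => ?_,
    (card_union_le _ _).trans (Nat.add_le_add_left card_image_le _)⟩
  · simpa only [image_subset_iff] using fun v hv => hg v (mem_sdiff.1 hv).1
  · by_cases hvT : v ∈ T.sup id
    · exact (sup_mono subset_union_left : T.sup id ≤ (T ∪ _).sup id) hvT
    · refine mem_sup.2 ⟨g v, mem_union_right _ (mem_image_of_mem g ?_), hvg v hv⟩
      exact mem_sdiff.2 ⟨hv, hvT⟩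

/-- After greedy saturation the uncovered vertices span a face, so there are at most `d` of them,
and each costs one more minimal non-face; `n ≥ 3d` makes the total at most `n - d`. -/
theorem exists_cover_card_eq (hd : 0 < K.dimP1) (h3 : 3 * K.dimP1 ≤ K.verts.card)
    (hnc : ∀ v ∈ K.verts, ∃ G ∈ K.minNonFaces, v ∈ G) :
    ∃ T ⊆ K.minNonFaces, T.card = K.verts.card - K.dimP1 ∧ K.verts ⊆ T.sup id := by
  obtain ⟨T₁, hT₁, hhalf, hsat⟩ := K.exists_saturated_cover
  have hrest : K.verts \ T₁.sup id ∈ K.faces := by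
    by_contra h
    obtain ⟨G, hG, hGsub⟩ := K.exists_minNonFaces_subset sdiff_subset h
    have hGU : G \ T₁.sup id = G := sdiff_eq_self_of_disjoint
      (disjoint_left.2 fun x hx => (mem_sdiff.1 (hGsub hx)).2)
    have := hGU ▸ hsat G hG
    have := K.two_le_card_of_mem_minNonFaces (K.faces_nonempty_of_dimP1_pos hd) hG
    omega
  have hrest_card := K.card_le_dimP1 hrest
  have hsplit := card_sdiff_add_card_eq_card (K.sup_subset_verts hT₁)
  obtain ⟨T₂, hT₂, hcov, hT₂card⟩ := K.exists_cover_card_le hnc hT₁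
  obtain ⟨T, hT₂T, hT, hTcard⟩ := exists_subsuperset_card_eq (n := K.verts.card - K.dimP1)
    hT₂ (by omega) (K.card_verts_sub_dimP1_le_card_minNonFaces hd)
  exact ⟨T, hT, hTcard, hcov.trans (sup_mono hT₂T)⟩

theorem card_verts_le_MT (hd : 0 < K.dimP1) (h3 : 3 * K.dimP1 ≤ K.verts.card)
    (hnc : ∀ v ∈ K.verts, ∃ G ∈ K.minNonFaces, v ∈ G) :
    K.verts.card ≤ K.MT (K.verts.card - K.dimP1) := by
  obtain ⟨T, hT, hTcard, hcov⟩ := K.exists_cover_card_eq hd h3 hnc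
  exact (card_le_card hcov).trans (K.le_MT hT hTcard)

def topFaces : Finset (Finset α) := K.faces.filter (·.card = K.dimP1)

theorem fCard_dimP1 : K.fCard K.dimP1 = K.topFaces.card := rfl

theorem topFaces_nonempty (hd : 0 < K.dimP1) : K.topFaces.Nonempty :=
  let ⟨F, hF, hFc⟩ := K.exists_mem_faces_card_eq_dimP1 hd
  ⟨F, mem_filter.2 ⟨hF, hFc⟩⟩

theorem sum_card_topFaces_mem :
    ∑ v ∈ K.verts, {F ∈ K.topFaces | v ∈ F}.card = K.dimP1 * K.topFaces.card := by
  have := sum_card_bipartiteAbove_eq_sum_card_bipartiteBelow (s := K.verts) (t := K.topFaces)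
    (r := (· ∈ ·))
  simp only [bipartiteAbove, bipartiteBelow, filter_mem_eq_inter] at this
  rw [this, sum_const_nat fun F hF => ?_, mul_comm]
  obtain ⟨hF, hFc⟩ := mem_filter.1 hF
  rw [inter_eq_right.2 (K.subset_verts F hF), hFc]

theorem exists_mul_card_topFaces_mem_le (hV : K.verts.Nonempty) :
    ∃ v ∈ K.verts, K.verts.card * {F ∈ K.topFaces | v ∈ F}.card ≤
      K.dimP1 * K.topFaces.card := by
  refine exists_le_of_sum_le hV ?_
  rw [← mul_sum, sum_card_topFaces_mem, sum_const, smul_eq_mul]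

open scoped Nat in
theorem taylorUB_iff : TaylorUB K ↔ K.fCard K.dimP1 * (K.verts.card - K.dimP1)! ≤
    ∏ i ∈ Icc 1 (K.verts.card - K.dimP1), K.MT i := by
  rw [TaylorUB, taylorUBval, le_div_iff₀ (by positivity)]
  norm_cast

theorem taylorUB_of_dimP1_eq_zero (hd : K.dimP1 = 0) : TaylorUB K := by
  have hV : K.verts.card = 0 := card_eq_zero.2 <| eq_empty_of_forall_notMem fun v hv => by
    simpa [hd] using K.card_le_dimP1 (K.singleton_mem v hv)
  rw [taylorUB_iff, hd, hV]
  simpa [fCard] using card_le_one.2 fun F hF G hG => by simp_all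

/-- Equivalently, `K` is a cone with apex `v`. -/
def IsConePoint (v : α) : Prop := ∀ G ∈ K.minNonFaces, v ∉ G

section Cone

variable {K} {v : α}

theorem insert_mem_faces_of_isConePoint (hv : v ∈ K.verts) (hvG : K.IsConePoint v) {F : Finset α}
    (hF : F ∈ K.faces) : insert v F ∈ K.faces := by
  by_contra h
  obtain ⟨G, hG, hvG', -⟩ := K.exists_minNonFaces_mem_subset_insert hF hv h
  exact hvG G hG hvG'

theorem mem_of_mem_topFaces_of_isConePoint (hv : v ∈ K.verts) (hvG : K.IsConePoint v)
    {F : Finset α} (hF : F ∈ K.topFaces) : v ∈ F := by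
  obtain ⟨hF, hFc⟩ := mem_filter.1 hF
  by_contra hvF
  have := K.card_le_dimP1 (insert_mem_faces_of_isConePoint hv hvG hF)
  rw [card_insert_of_notMem hvF] at this
  omega

theorem dimP1_induced_erase_of_isConePoint (hv : v ∈ K.verts) (hvG : K.IsConePoint v)
    (hd : 0 < K.dimP1) :
    (K.induced (K.verts.erase v)).dimP1 = K.dimP1 - 1 := by
  have hmem : ∀ F ∈ K.topFaces, v ∈ F := fun _ => mem_of_mem_topFaces_of_isConePoint hv hvG
  apply le_antisymm
  · refine Finset.sup_le fun F hF => ?_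
    obtain ⟨hF, hvF⟩ := K.mem_faces_induced_erase.1 hF
    have hFc : F.card ≠ K.dimP1 := fun hFc => hvF (hmem F (mem_filter.2 ⟨hF, hFc⟩))
    have := K.card_le_dimP1 hF
    omega
  · obtain ⟨F, hF, hFc⟩ := K.exists_mem_faces_card_eq_dimP1 hd
    have hF' : F.erase v ∈ (K.induced (K.verts.erase v)).faces :=
      K.mem_faces_induced_erase.2 ⟨K.down_closed F hF _ (erase_subset v F), notMem_erase v F⟩
    rw [← hFc, ← card_erase_of_mem (hmem F (mem_filter.2 ⟨hF, hFc⟩))]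
    exact card_le_dimP1 _ hF'

theorem minNonFaces_induced_erase_of_isConePoint (hvG : K.IsConePoint v) :
    (K.induced (K.verts.erase v)).minNonFaces = K.minNonFaces := by
  ext G
  rw [K.mem_minNonFaces_induced (erase_subset v _), and_iff_left_iff_imp]
  exact fun hG => subset_erase.2 ⟨((K.mem_minNonFaces).1 hG).1, hvG G hG⟩

theorem card_topFaces_induced_erase_of_isConePoint (hv : v ∈ K.verts) (hvG : K.IsConePoint v)
    (hd : 0 < K.dimP1) :
    (K.induced (K.verts.erase v)).topFaces.card = K.topFaces.card := by
  have hdim := dimP1_induced_erase_of_isConePoint hv hvG hd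
  have hmem : ∀ F ∈ K.topFaces, v ∈ F := fun _ => mem_of_mem_topFaces_of_isConePoint hv hvG
  refine card_nbij' (insert v) (erase · v) (fun F hF => ?_) (fun F hF => ?_)
    (fun F hF => ?_) (fun F hF => insert_erase (hmem F hF))
  · obtain ⟨hF, hFc⟩ := mem_filter.1 hF
    obtain ⟨hF, hvF⟩ := K.mem_faces_induced_erase.1 hF
    refine mem_filter.2 ⟨insert_mem_faces_of_isConePoint hv hvG hF, ?_⟩
    rw [card_insert_of_notMem hvF, hFc, hdim]
    omega
  · obtain ⟨hF', hFc⟩ := mem_filter.1 hF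
    refine mem_filter.2 ⟨K.mem_faces_induced_erase.2
      ⟨K.down_closed F hF' _ (erase_subset v F), notMem_erase v F⟩, ?_⟩
    rw [card_erase_of_mem (hmem F hF), hFc, hdim]
  · exact erase_insert (K.mem_faces_induced_erase.1 (mem_filter.1 hF).1).2

/-- Deleting the apex of a cone changes neither `n - d`, nor `f_{d-1}`, nor the Taylor shifts. -/
theorem taylorUB_induced_erase_iff_of_isConePoint (hv : v ∈ K.verts) (hvG : K.IsConePoint v)
    (hd : 0 < K.dimP1) : TaylorUB (K.induced (K.verts.erase v)) ↔ TaylorUB K := by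
  have hnd : K.verts.card - 1 - (K.dimP1 - 1) = K.verts.card - K.dimP1 := by
    have := K.dimP1_le_card_verts
    omega
  rw [taylorUB_iff, taylorUB_iff, fCard_dimP1, fCard_dimP1,
    card_topFaces_induced_erase_of_isConePoint hv hvG hd,
    dimP1_induced_erase_of_isConePoint hv hvG hd, card_verts_induced_erase _ hv, hnd]
  simp only [MT, minNonFaces_induced_erase_of_isConePoint hvG]

end Cone

section Deletion

variable {K} {v : α}

theorem dimP1_induced_erase_of_exists_notMem (h : ∃ F ∈ K.topFaces, v ∉ F) :
    (K.induced (K.verts.erase v)).dimP1 = K.dimP1 := by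
  obtain ⟨F, hF, hvF⟩ := h
  obtain ⟨hF, hFc⟩ := mem_filter.1 hF
  refine le_antisymm (K.dimP1_induced_le _) ?_
  rw [← hFc]
  exact card_le_dimP1 _ (K.mem_faces_induced_erase.2 ⟨hF, hvF⟩)

theorem card_topFaces_induced_erase_add (h : ∃ F ∈ K.topFaces, v ∉ F) :
    (K.induced (K.verts.erase v)).topFaces.card + {F ∈ K.topFaces | v ∈ F}.card =
      K.topFaces.card := by
  have htop : (K.induced (K.verts.erase v)).topFaces = {F ∈ K.topFaces | v ∉ F} := by
    ext F
    simp only [topFaces, mem_filter, mem_faces_induced_erase,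
      dimP1_induced_erase_of_exists_notMem h]
    tauto
  rw [htop, add_comm, card_filter_add_card_filter_not]

end Deletion

open scoped Nat in
/-- For a vertex `v` in the fewest top faces, `n · f_{d-1}(K[V - v]) ≥ (n - d) · f_{d-1}(K)`,
and the extra factor `M̃_{n-d}(K)` of the bound for `K` is `n`. -/
theorem taylorUB_of_forall_exists_minNonFaces_mem (hd : 0 < K.dimP1)
    (h3 : 3 * K.dimP1 ≤ K.verts.card) (hnc : ∀ v ∈ K.verts, ∃ G ∈ K.minNonFaces, v ∈ G)
    (hdel : ∀ v ∈ K.verts, TaylorUB (K.induced (K.verts.erase v))) : TaylorUB K := by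
  obtain ⟨v, hv, hdeg⟩ := K.exists_mul_card_topFaces_mem_le (card_pos.1 (by omega))
  have havoid : ∃ F ∈ K.topFaces, v ∉ F := by
    by_contra! h
    rw [filter_true_of_mem h] at hdeg
    have := card_pos.2 (K.topFaces_nonempty hd)
    nlinarith
  have hsplit := card_topFaces_induced_erase_add havoid
  obtain ⟨m, hm⟩ : ∃ m, K.verts.card - K.dimP1 = m + 1 :=
    ⟨K.verts.card - K.dimP1 - 1, by omega⟩
  have hUB := (taylorUB_iff _).1 (hdel v hv)
  rw [fCard_dimP1, dimP1_induced_erase_of_exists_notMem havoid, card_verts_induced_erase _ hv,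
    show K.verts.card - 1 - K.dimP1 = m by omega] at hUB
  have hMT := K.card_verts_le_MT hd h3 hnc
  rw [hm] at hMT
  rw [taylorUB_iff, fCard_dimP1, hm, prod_Icc_succ_top (by omega), Nat.factorial_succ]
  calc K.topFaces.card * ((m + 1) * m !)
      = K.topFaces.card * (K.verts.card - K.dimP1) * m ! := by rw [hm, mul_assoc]
    _ ≤ K.verts.card * (K.induced (K.verts.erase v)).topFaces.card * m ! := by
        refine Nat.mul_le_mul_right _ ?_
        rw [← hsplit]
        exact Nat.add_mul_sub_le_mul (by omega) (hsplit ▸ hdeg)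
    _ ≤ K.verts.card * ∏ i ∈ Icc 1 m, K.MT i := by
        rw [mul_assoc]
        exact Nat.mul_le_mul_left _
          (hUB.trans (prod_le_prod' fun i _ => K.MT_induced_le (erase_subset v _) i))
    _ ≤ (∏ i ∈ Icc 1 m, K.MT i) * K.MT (m + 1) := by
        rw [mul_comm]
        exact Nat.mul_le_mul_left _ hMT

end SC

open SC in
/-- If a class of simplicial complexes closed under induced subcomplexes is such that every
member on fewer than `3 (dim + 1)` vertices satisfies the Taylor upper bound, then every
member satisfies the Taylor upper bound. -/
theorem taylorUB_of_small_cases {α : Type*} [DecidableEq α] (C : Set (SC α))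
    (hclosed : ∀ K ∈ C, ∀ W ⊆ K.verts, K.induced W ∈ C)
    (hsmall : ∀ K ∈ C, K.verts.card < 3 * K.dimP1 → TaylorUB K) :
    ∀ K ∈ C, TaylorUB K := by
  intro K hK
  induction hn : K.verts.card using Nat.strong_induction_on generalizing K with
  | _ n IH =>
  have hdel : ∀ v ∈ K.verts, TaylorUB (K.induced (K.verts.erase v)) := fun v hv =>
    IH _ (by rw [← hn, K.verts_induced (erase_subset v _)]; exact card_erase_lt_of_mem hv) _
      (hclosed K hK _ (erase_subset v _)) rfl
  rcases Nat.eq_zero_or_pos K.dimP1 with hd | hd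
  · exact K.taylorUB_of_dimP1_eq_zero hd
  by_cases hsize : K.verts.card < 3 * K.dimP1
  · exact hsmall K hK hsize
  by_cases hcone : ∃ v ∈ K.verts, K.IsConePoint v
  · obtain ⟨v, hv, hvG⟩ := hcone
    exact (taylorUB_induced_erase_iff_of_isConePoint hv hvG hd).1 (hdel v hv)
  · simp only [IsConePoint, not_exists, not_and, not_forall, not_not, exists_prop] at hcone
    exact K.taylorUB_of_forall_exists_minNonFaces_mem hd (by omega) hcone hdel
end

section
/- Every flag simplicial complex satisfies the Taylor upper bound: if K is a flag complex of dimension d−1 with n vertices, then f_{d−1}(K) ≤ (∏_{i=1}^{n−d} M̃_i(K))/(n−d)!. -/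
open Finset

/-! The faces of a flag complex are exactly the independent sets of the graph formed by its
minimal non-faces, and `d = dimP1` is the independence number. Double counting pairs `(v, F)`
with `F` a maximum independent set and `v ∉ F` gives `f · (n - d) = ∑_v f(K - v)`, where each
summand is bounded by induction on the vertex set (keeping `d` as a mere upper bound on
independent sets, since deleting a vertex may lower the independence number). Only vertices
avoided by some maximum independent set contribute, and there are at most `M̃_{n-d}` of them:
fixing a maximum independent set `I`, Hall's theorem matches the avoidable vertices of `I` into
`V \ I`, and together with one edge from every other vertex of `V \ I` into `I` this gives
`n - d` edges covering all avoidable vertices. -/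

open scoped Nat

section PairGraph

variable {α : Type*}

def IsIndep (E : Finset (Finset α)) (S : Finset α) : Prop := ∀ e ∈ E, ¬ e ⊆ S

lemma IsIndep.mono {E : Finset (Finset α)} {S T : Finset α} (hS : IsIndep E S) (hTS : T ⊆ S) :
    IsIndep E T :=
  fun e he heT => hS e he (heT.trans hTS)

variable [DecidableEq α]

instance (E : Finset (Finset α)) : DecidablePred (IsIndep E) :=
  fun S => inferInstanceAs (Decidable (∀ e ∈ E, ¬ e ⊆ S))

def indepSetFinset (V : Finset α) (E : Finset (Finset α)) (d : ℕ) : Finset (Finset α) :=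
  {S ∈ V.powerset | #S = d ∧ IsIndep E S}

def neighbors (V : Finset α) (E : Finset (Finset α)) (a : α) : Finset α :=
  {x ∈ V | {a, x} ∈ E}

noncomputable def maxCover (E : Finset (Finset α)) (i : ℕ) : ℕ :=
  sSup {n | ∃ T ⊆ E, #T = i ∧ #(T.sup id) = n}

variable {V S T I : Finset α} {E : Finset (Finset α)} {d : ℕ}

lemma mem_indepSetFinset : S ∈ indepSetFinset V E d ↔ S ⊆ V ∧ #S = d ∧ IsIndep E S := by
  rw [indepSetFinset, mem_filter, mem_powerset]

lemma mem_neighbors {a x : α} : x ∈ neighbors V E a ↔ x ∈ V ∧ {a, x} ∈ E := mem_filter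

lemma isIndep_iff_of_card_eq_two (hE : ∀ e ∈ E, #e = 2) :
    IsIndep E S ↔ ∀ x ∈ S, ∀ y ∈ S, {x, y} ∉ E := by
  refine ⟨fun hS x hx y hy hxy => hS _ hxy (insert_subset hx (singleton_subset_iff.2 hy)), ?_⟩
  intro h e he heS
  obtain ⟨x, y, -, rfl⟩ := card_eq_two.1 (hE e he)
  exact h x (heS (mem_insert_self x _)) y (heS (mem_insert_of_mem (mem_singleton_self y))) he

lemma IsIndep.notMem_of_mem_neighbors (hT : IsIndep E T) {a x : α} (ha : a ∈ T)
    (hx : x ∈ neighbors V E a) : x ∉ T :=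
  fun hxT => hT _ (mem_neighbors.1 hx).2 (insert_subset ha (singleton_subset_iff.2 hxT))

lemma IsIndep.sdiff_biUnion_neighbors_union (hE : ∀ e ∈ E, #e = 2) (hS : IsIndep E S)
    (hT : IsIndep E T) (hTV : T ⊆ V) : IsIndep E (T \ S.biUnion (neighbors V E) ∪ S) := by
  rw [isIndep_iff_of_card_eq_two hE] at hS hT ⊢
  have hcross : ∀ x ∈ T \ S.biUnion (neighbors V E), ∀ y ∈ S, {x, y} ∉ E := by
    intro x hx y hy hxy
    rw [mem_sdiff, mem_biUnion] at hx
    exact hx.2 ⟨y, hy, mem_neighbors.2 ⟨hTV hx.1, pair_comm x y ▸ hxy⟩⟩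
  intro x hx y hy
  rcases mem_union.1 hx with hx | hx <;> rcases mem_union.1 hy with hy | hy
  · exact hT x (mem_sdiff.1 hx).1 y (mem_sdiff.1 hy).1
  · exact hcross x hx y hy
  · exact pair_comm x y ▸ hcross y hy x hx
  · exact hS x hx y hy

/-- Take a maximum independent set `T` avoiding some `a ∈ S`. Trading `T ∩ N(S)` for `S \ T`
keeps `T` independent, so `#(S \ T) ≤ #(T ∩ N(S))`; by induction `S ∩ T ⊂ S` has at least
`#(S ∩ T)` neighbours, and they all lie outside `T`. -/
lemma card_le_card_biUnion_neighbors (hE : ∀ e ∈ E, #e = 2)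
    (hmax : ∀ S ⊆ V, IsIndep E S → #S ≤ d) (hSV : S ⊆ V) (hS : IsIndep E S)
    (havoid : ∀ a ∈ S, ∃ T ∈ indepSetFinset V E d, a ∉ T) :
    #S ≤ #(S.biUnion (neighbors V E)) := by
  induction S using Finset.strongInduction with
  | H S ih =>
  obtain rfl | ⟨a, haS⟩ := S.eq_empty_or_nonempty
  · simp
  obtain ⟨T, hT, haT⟩ := havoid a haS
  obtain ⟨hTV, hTd, hTind⟩ := mem_indepSetFinset.1 hT
  set N := S.biUnion (neighbors V E)
  have hinter : #(S ∩ T) ≤ #(N \ T) := by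
    have hlt : S ∩ T ⊂ S := ssubset_of_subset_of_ne inter_subset_left
      fun h => haT (mem_inter.1 (h ▸ haS)).2
    refine (ih _ hlt (inter_subset_left.trans hSV) (hS.mono inter_subset_left)
      fun b hb => havoid b (mem_inter.1 hb).1).trans (card_le_card ?_)
    intro x hx
    obtain ⟨b, hb, hxb⟩ := mem_biUnion.1 hx
    exact mem_sdiff.2 ⟨mem_biUnion.2 ⟨b, (mem_inter.1 hb).1, hxb⟩,
      hTind.notMem_of_mem_neighbors (mem_inter.1 hb).2 hxb⟩
  have hswap : #(T \ N ∪ S) ≤ #T := hTd ▸ hmax _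
    (union_subset (sdiff_subset.trans hTV) hSV) (hS.sdiff_biUnion_neighbors_union hE hTind hTV)
  have h1 := card_union_add_card_inter (T \ N) S
  have h2 : #(T \ N ∩ S) ≤ #(S ∩ T) :=
    card_le_card fun x hx =>
      mem_inter.2 ⟨(mem_inter.1 hx).2, (mem_sdiff.1 (mem_inter.1 hx).1).1⟩
  have h3 := card_sdiff_add_card_inter T N
  have h4 := card_sdiff_add_card_inter N T
  rw [inter_comm N T] at h4
  omega

lemma exists_mem_pair_mem_of_notMem (hE : ∀ e ∈ E, #e = 2)
    (hmax : ∀ S ⊆ V, IsIndep E S → #S ≤ d) (hI : I ∈ indepSetFinset V E d) {v : α}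
    (hvV : v ∈ V) (hvI : v ∉ I) : ∃ u ∈ I, {u, v} ∈ E := by
  obtain ⟨hIV, hId, hIind⟩ := mem_indepSetFinset.1 hI
  by_contra! hnot
  have hind : IsIndep E (insert v I) := by
    rw [isIndep_iff_of_card_eq_two hE] at hIind ⊢
    intro x hx y hy
    rcases mem_insert.1 hx with rfl | hxI <;> rcases mem_insert.1 hy with rfl | hyI
    · intro hxx
      simpa using hE _ hxx
    · exact pair_comm x y ▸ hnot y hyI
    · exact hnot x hxI
    · exact hIind x hxI y hyI
  have := hmax _ (insert_subset hvV hIV) hind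
  rw [card_insert_of_notMem hvI] at this
  omega

lemma exists_injective_of_forall_subset_card_le {ι : Type*} {J : Finset ι} {t : ι → Finset α}
    (h : ∀ S ⊆ J, #S ≤ #(S.biUnion t)) :
    ∃ g : J → α, Function.Injective g ∧ ∀ a : J, g a ∈ t a :=
  (all_card_le_biUnion_card_iff_exists_injective fun a : J => t a).1 fun s => by
    have hbi : s.biUnion (fun a => t a) = (s.map (Function.Embedding.subtype _)).biUnion t := by
      ext; simp
    rw [hbi, ← card_map (Function.Embedding.subtype _)]
    exact h _ fun x hx => by obtain ⟨y, -, rfl⟩ := mem_map.1 hx; exact y.2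

lemma injOn_pair_of_forall_notMem {X : Finset α} {p : α → α} (hp : ∀ v ∈ X, p v ∉ X) :
    Set.InjOn (fun v => ({p v, v} : Finset α)) X := by
  intro v hv w hw hvw
  have hv' : v ∈ ({p w, w} : Finset α) := by
    simp only at hvw
    exact hvw ▸ mem_insert_of_mem (mem_singleton_self v)
  rcases mem_insert.1 hv' with h | h
  · exact absurd (h ▸ hv) (hp w hw)
  · exact mem_singleton.1 h

/-- The `#V - d` edges: for each `v ∉ I` one edge from `v` into `I`, chosen as the Hall
matching edge when `v` is matched. -/
theorem exists_cover_of_avoided (hE : ∀ e ∈ E, #e = 2)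
    (hmax : ∀ S ⊆ V, IsIndep E S → #S ≤ d) (hI : I ∈ indepSetFinset V E d) :
    ∃ T ⊆ E, #T = #V - d ∧
      {v ∈ V | ∃ S ∈ indepSetFinset V E d, v ∉ S} ⊆ T.sup id := by
  obtain ⟨hIV, hId, hIind⟩ := mem_indepSetFinset.1 hI
  set J := {a ∈ I | ∃ S ∈ indepSetFinset V E d, a ∉ S}
  have hJI : J ⊆ I := filter_subset _ _
  obtain ⟨g, hg_inj, hg⟩ := exists_injective_of_forall_subset_card_le fun S hSJ =>
    card_le_card_biUnion_neighbors hE hmax ((hSJ.trans hJI).trans hIV) (hIind.mono (hSJ.trans hJI))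
      fun a ha => (mem_filter.1 (hSJ ha)).2
  have hpartner : ∀ v ∈ V \ I, ∃ u ∈ I, {u, v} ∈ E ∧ ∀ a : J, g a = v → u = a := by
    intro v hv
    obtain ⟨hvV, hvI⟩ := mem_sdiff.1 hv
    by_cases hmatched : ∃ a : J, g a = v
    · obtain ⟨a, rfl⟩ := hmatched
      exact ⟨a, hJI a.2, (mem_neighbors.1 (hg a)).2,
        fun b hb => congrArg Subtype.val (hg_inj hb).symm⟩
    · obtain ⟨u, hu, huv⟩ := exists_mem_pair_mem_of_notMem hE hmax hI hvV hvI
      exact ⟨u, hu, huv, fun a ha => absurd ⟨a, ha⟩ hmatched⟩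
  choose! p hpI hpE hpg using hpartner
  refine ⟨(V \ I).image fun v => {p v, v}, image_subset_iff.2 hpE, ?_, ?_⟩
  · have hinj := injOn_pair_of_forall_notMem fun v hv hpv => (mem_sdiff.1 hpv).2 (hpI v hv)
    rw [card_image_of_injOn hinj, card_sdiff_of_subset hIV, hId]
  intro v hv
  obtain ⟨hvV, hvavoid⟩ := mem_filter.1 hv
  by_cases hvI : v ∈ I
  · let a : J := ⟨v, mem_filter.2 ⟨hvI, hvavoid⟩⟩
    have hgV : g a ∈ V \ I :=
      mem_sdiff.2 ⟨(mem_neighbors.1 (hg a)).1, hIind.notMem_of_mem_neighbors hvI (hg a)⟩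
    refine mem_sup.2 ⟨_, mem_image_of_mem _ hgV, ?_⟩
    rw [hpg _ hgV a rfl]
    exact mem_insert_self _ _
  · exact mem_sup.2 ⟨_, mem_image_of_mem _ (mem_sdiff.2 ⟨hvV, hvI⟩),
      mem_insert_of_mem (mem_singleton_self v)⟩

lemma le_maxCover {T : Finset (Finset α)} (hTE : T ⊆ E) : #(T.sup id) ≤ maxCover E #T :=
  le_csSup ⟨#(E.sup id), by
    rintro n ⟨T', hT'E, -, rfl⟩
    exact card_le_card (sup_mono hT'E)⟩ ⟨T, hTE, rfl, rfl⟩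

lemma card_filter_avoided_le_maxCover (hE : ∀ e ∈ E, #e = 2)
    (hmax : ∀ S ⊆ V, IsIndep E S → #S ≤ d) :
    #{v ∈ V | ∃ S ∈ indepSetFinset V E d, v ∉ S} ≤ maxCover E (#V - d) := by
  obtain hB | ⟨I, hI⟩ := (indepSetFinset V E d).eq_empty_or_nonempty
  · simp [hB]
  obtain ⟨T, hTE, hTcard, hcover⟩ := exists_cover_of_avoided hE hmax hI
  exact (card_le_card hcover).trans (hTcard ▸ le_maxCover hTE)

lemma sum_card_filter_notMem_eq {B : Finset (Finset α)} (hB : ∀ S ∈ B, S ⊆ V ∧ #S = d) :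
    ∑ v ∈ V, #{S ∈ B | v ∉ S} = #B * (#V - d) :=
  calc ∑ v ∈ V, #{S ∈ B | v ∉ S} = ∑ S ∈ B, #{v ∈ V | v ∉ S} :=
        sum_card_bipartiteAbove_eq_sum_card_bipartiteBelow _
    _ = ∑ _S ∈ B, (#V - d) := sum_congr rfl fun S hS => by
        rw [← sdiff_eq_filter, card_sdiff_of_subset (hB S hS).1, (hB S hS).2]
    _ = #B * (#V - d) := by rw [sum_const, smul_eq_mul]

lemma filter_notMem_indepSetFinset (v : α) :
    {S ∈ indepSetFinset V E d | v ∉ S} = indepSetFinset (V.erase v) E d := by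
  ext S
  simp only [mem_filter, mem_indepSetFinset, subset_erase]
  tauto

lemma card_indepSetFinset_le_one (hVd : #V ≤ d) : #(indepSetFinset V E d) ≤ 1 :=
  card_le_one.2 fun S hS T hT => by
    obtain ⟨hSV, hSd, -⟩ := mem_indepSetFinset.1 hS
    obtain ⟨hTV, hTd, -⟩ := mem_indepSetFinset.1 hT
    rw [eq_of_subset_of_card_le hSV (by omega), eq_of_subset_of_card_le hTV (by omega)]

theorem card_indepSetFinset_mul_factorial_le (hE : ∀ e ∈ E, #e = 2)
    (hmax : ∀ S ⊆ V, IsIndep E S → #S ≤ d) :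
    #(indepSetFinset V E d) * (#V - d)! ≤ ∏ i ∈ Icc 1 (#V - d), maxCover E i := by
  induction V using Finset.strongInduction with
  | H V ih =>
  set B := indepSetFinset V E d
  obtain hVd | hdV := le_or_gt #V d
  · simpa [Nat.sub_eq_zero_of_le hVd] using card_indepSetFinset_le_one hVd
  obtain ⟨k, hk⟩ : ∃ k, #V - d = k + 1 := ⟨#V - d - 1, by omega⟩
  have hvertex : ∀ v ∈ V, #{S ∈ B | v ∉ S} * k ! ≤ ∏ i ∈ Icc 1 k, maxCover E i := by
    intro v hv
    have := ih (V.erase v) (erase_ssubset hv) fun S hS => hmax S (hS.trans (erase_subset v V))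
    rwa [card_erase_of_mem hv, show #V - 1 - d = k by omega,
      ← filter_notMem_indepSetFinset] at this
  set A := {v ∈ V | ∃ S ∈ B, v ∉ S}
  have hA : #A ≤ maxCover E (k + 1) := hk ▸ card_filter_avoided_le_maxCover hE hmax
  calc #B * (#V - d)! = (∑ v ∈ V, #{S ∈ B | v ∉ S}) * k ! := by
        rw [sum_card_filter_notMem_eq fun S hS => (mem_indepSetFinset.1 hS).imp_right And.left, hk,
          Nat.factorial_succ]
        ring
    _ = ∑ v ∈ A, #{S ∈ B | v ∉ S} * k ! := by
        rw [sum_mul, sum_filter_of_ne]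
        intro v _ hv
        obtain ⟨S, hS⟩ := card_ne_zero.1 (left_ne_zero_of_mul hv)
        exact ⟨S, mem_filter.1 hS⟩
    _ ≤ #A * ∏ i ∈ Icc 1 k, maxCover E i :=
        sum_le_card_nsmul _ _ _ fun v hv => hvertex v (mem_filter.1 hv).1
    _ ≤ maxCover E (k + 1) * ∏ i ∈ Icc 1 k, maxCover E i := Nat.mul_le_mul_right _ hA
    _ = ∏ i ∈ Icc 1 (#V - d), maxCover E i := by
        rw [hk, prod_Icc_succ_top (by omega), mul_comm]

end PairGraph

namespace SC

variable {α : Type*} [DecidableEq α]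

lemma mem_faces_of_isIndep (K : SC α) {S : Finset α} (hSV : S ⊆ K.verts)
    (hS : IsIndep K.minNonFaces S) : S ∈ K.faces := by
  induction S using Finset.strongInduction with
  | H S ih =>
  by_contra hnf
  refine hS S (mem_filter.2 ⟨mem_powerset.2 hSV, hnf, fun G hG hGS => ?_⟩) subset_rfl
  have hGS' := mem_powerset.1 hG
  exact ih G (ssubset_of_subset_of_ne hGS' hGS) (hGS'.trans hSV) (hS.mono hGS')

lemma filter_card_faces_eq_indepSetFinset (K : SC α) (d : ℕ) :
    {F ∈ K.faces | #F = d} = indepSetFinset K.verts K.minNonFaces d := by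
  ext F
  rw [mem_filter, mem_indepSetFinset]
  constructor
  · rintro ⟨hF, hFd⟩
    exact ⟨K.subset_verts F hF, hFd,
      fun e he heF => (mem_filter.1 he).2.1 (K.down_closed F hF e heF)⟩
  · rintro ⟨hFV, hFd, hF⟩
    exact ⟨K.mem_faces_of_isIndep hFV hF, hFd⟩

lemma MT_eq_maxCover (K : SC α) (i : ℕ) : K.MT i = maxCover K.minNonFaces i := rfl

end SC

open SC in
/-- Every flag simplicial complex (all minimal non-faces have two vertices) of dimension
`d-1` with `n` vertices satisfies the Taylor upper bound. -/
theorem taylorUB_of_flag {α : Type*} [DecidableEq α] (K : SC α)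
    (hflag : ∀ F ∈ K.minNonFaces, F.card = 2)
    (d n : ℕ) (hdim : K.dimP1 = d) (hn : K.verts.card = n) :
    (K.fCard d : ℚ) ≤
      (∏ i ∈ Finset.Icc 1 (n - d), (K.MT i : ℚ)) / (Nat.factorial (n - d)) := by
  subst hdim hn
  have hcount := card_indepSetFinset_mul_factorial_le (V := K.verts) hflag
    fun S hSV hS => le_sup (f := card) (K.mem_faces_of_isIndep hSV hS)
  simp_rw [← MT_eq_maxCover] at hcount
  rw [le_div_iff₀ (by positivity), fCard, filter_card_faces_eq_indepSetFinset]
  exact_mod_cast hcount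
end
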